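/- If g₅₅ and g₆₆ have the same sign, then the conditions ρ₂ = ρ₂₄ and ρ₄ = ρ₄₂ (with f₂ ≠ f₄ and all denominators nonzero) force f'₅ = f'₆ = 0. -/

import Mathlib

/-!
Writing `w_σ = (f'_σ)² / g_σσ`, `u_σ = 1 / (f_σ - f_p)` and `v_σ = 1 / (f_σ - f_q)`, the differences
`ρ_p - ρ_pq` and `ρ_q - ρ_qp` are `-¼ Σ w_σ u_σ (u_σ - v_σ)` and `-¼ Σ w_σ v_σ (v_σ - u_σ)`, so their sum is
`-¼ Σ w_σ (u_σ - v_σ)²`. When all `g_σσ` have the same sign every term of this sum has that sign, so each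
vanishes; and `u_σ ≠ v_σ` because `f_p ≠ f_q`.
-/

open Finset

variable {ι : Type*}

theorem eq_zero_of_sum_div_eq_zero {𝕜 : Type*} [Field 𝕜] [LinearOrder 𝕜] [IsStrictOrderedRing 𝕜]
    {s : Finset ι} {x g : ι → 𝕜} (hx : ∀ i ∈ s, 0 ≤ x i) (hg : ∀ i ∈ s, ∀ j ∈ s, 0 < g i * g j)
    (hsum : ∑ i ∈ s, x i / g i = 0) : ∀ i ∈ s, x i = 0 := by
  intro i hi
  have hscaled : ∑ j ∈ s, x j * (g i / g j) = 0 := by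
    rw [← mul_zero (g i), ← hsum, mul_sum]
    exact sum_congr rfl fun j _ => by ring
  have hnonneg : ∀ j ∈ s, 0 ≤ x j * (g i / g j) := fun j hj =>
    mul_nonneg (hx j hj) (div_pos_iff.2 (mul_pos_iff.1 (hg i hi j hj))).le
  have hgi : g i ≠ 0 := left_ne_zero_of_mul (hg i hi i hi).ne'
  simpa [hgi] using (sum_eq_zero_iff_of_nonneg hnonneg).1 hscaled i hi

variable [Fintype ι]

noncomputable def rho (f f' g : ι → ℝ) (p : ℝ) : ℝ :=
  -(1 / 4) * ∑ σ, f' σ ^ 2 / ((f σ - p) ^ 2 * g σ)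

noncomputable def rhoMixed (f f' g : ι → ℝ) (p q : ℝ) : ℝ :=
  -(1 / 4) * ∑ σ, f' σ ^ 2 / ((f σ - p) * (f σ - q) * g σ)

theorem rho_sub_rhoMixed_add_rho_sub_rhoMixed (f f' g : ι → ℝ) (p q : ℝ) :
    (rho f f' g p - rhoMixed f f' g p q) + (rho f f' g q - rhoMixed f f' g q p) =
      -(1 / 4) * ∑ σ, f' σ ^ 2 * (1 / (f σ - p) - 1 / (f σ - q)) ^ 2 / g σ := by
  simp only [rho, rhoMixed, ← mul_sub, ← mul_add, ← sum_sub_distrib, ← sum_add_distrib]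
  congr 1
  refine sum_congr rfl fun σ _ => ?_
  simp only [div_eq_mul_inv, mul_inv, ← inv_pow]
  ring

theorem derivs_eq_zero_of_rho_eq_rhoMixed {f f' g : ι → ℝ} {p q : ℝ} (hpq : p ≠ q)
    (hg : ∀ σ τ, 0 < g σ * g τ)
    (hρp : rho f f' g p = rhoMixed f f' g p q) (hρq : rho f f' g q = rhoMixed f f' g q p) :
    ∀ σ, f' σ = 0 := by
  intro σ
  have hsum : ∑ τ, f' τ ^ 2 * (1 / (f τ - p) - 1 / (f τ - q)) ^ 2 / g τ = 0 := by
    have := rho_sub_rhoMixed_add_rho_sub_rhoMixed f f' g p q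
    rw [hρp, hρq] at this
    linarith
  have hterm := eq_zero_of_sum_div_eq_zero (fun τ _ => by positivity) (fun τ _ τ' _ => hg τ τ')
    hsum σ (mem_univ σ)
  have hsep : 1 / (f σ - p) - 1 / (f σ - q) ≠ 0 := by
    rw [sub_ne_zero, Ne, one_div, one_div, inv_inj, sub_right_inj]
    exact hpq
  exact pow_eq_zero_iff two_ne_zero |>.1 ((mul_eq_zero.1 hterm).resolve_right (pow_ne_zero 2 hsep))

theorem rho_conditions_force_zero_general (f₂ f₄ f₅ f₆ f₅' f₆' g₅₅ g₆₆ : ℝ)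
    (h24 : f₂ ≠ f₄) (hsign : 0 < g₅₅ * g₆₆)
    (hρ₂ : -(1/4) * (f₅' ^ 2 / ((f₅ - f₂) ^ 2 * g₅₅) + f₆' ^ 2 / ((f₆ - f₂) ^ 2 * g₆₆)) =
      -(1/4) * (f₅' ^ 2 / ((f₅ - f₂) * (f₅ - f₄) * g₅₅) +
        f₆' ^ 2 / ((f₆ - f₂) * (f₆ - f₄) * g₆₆)))
    (hρ₄ : -(1/4) * (f₅' ^ 2 / ((f₅ - f₄) ^ 2 * g₅₅) + f₆' ^ 2 / ((f₆ - f₄) ^ 2 * g₆₆)) =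
      -(1/4) * (f₅' ^ 2 / ((f₅ - f₄) * (f₅ - f₂) * g₅₅) +
        f₆' ^ 2 / ((f₆ - f₄) * (f₆ - f₂) * g₆₆))) :
    f₅' = 0 ∧ f₆' = 0 := by
  set f := ![f₅, f₆]
  set f' := ![f₅', f₆']
  set g := ![g₅₅, g₆₆]
  have hg : ∀ σ τ, 0 < g σ * g τ := by
    have h₅ : g₅₅ ≠ 0 := left_ne_zero_of_mul hsign.ne'
    have h₆ : g₆₆ ≠ 0 := right_ne_zero_of_mul hsign.ne'
    simp [g, Fin.forall_fin_two, mul_self_pos, h₅, h₆, hsign, mul_comm g₆₆]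
  have hderiv := derivs_eq_zero_of_rho_eq_rhoMixed (f := f) (f' := f') h24 hg
    (by simpa [rho, rhoMixed, f, f', g] using hρ₂) (by simpa [rho, rhoMixed, f, f', g] using hρ₄)
  exact ⟨hderiv 0, hderiv 1⟩

/-- if `g₅₅` and `g₆₆` have the same sign, the conditions
`ρ₂ = ρ₂₄` and `ρ₄ = ρ₄₂` force `f'₅ = f'₆ = 0`. -/
theorem rho_conditions_force_zero (f₂ f₄ f₅ f₆ f₅' f₆' g₅₅ g₆₆ : ℝ)
    (h24 : f₂ ≠ f₄) (h52 : f₅ ≠ f₂) (h54 : f₅ ≠ f₄) (h62 : f₆ ≠ f₂) (h64 : f₆ ≠ f₄)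
    (hg₅ : g₅₅ ≠ 0) (hg₆ : g₆₆ ≠ 0) (hsign : 0 < g₅₅ * g₆₆)
    (hρ₂ : -(1/4) * (f₅' ^ 2 / ((f₅ - f₂) ^ 2 * g₅₅) + f₆' ^ 2 / ((f₆ - f₂) ^ 2 * g₆₆)) =
      -(1/4) * (f₅' ^ 2 / ((f₅ - f₂) * (f₅ - f₄) * g₅₅) +
        f₆' ^ 2 / ((f₆ - f₂) * (f₆ - f₄) * g₆₆)))
    (hρ₄ : -(1/4) * (f₅' ^ 2 / ((f₅ - f₄) ^ 2 * g₅₅) + f₆' ^ 2 / ((f₆ - f₄) ^ 2 * g₆₆)) =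
      -(1/4) * (f₅' ^ 2 / ((f₅ - f₄) * (f₅ - f₂) * g₅₅) +
        f₆' ^ 2 / ((f₆ - f₄) * (f₆ - f₂) * g₆₆))) :
    f₅' = 0 ∧ f₆' = 0 :=
  rho_conditions_force_zero_general f₂ f₄ f₅ f₆ f₅' f₆' g₅₅ g₆₆ h24 hsign hρ₂ hρ₄
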